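/- arXiv:0709.2216 — 2 statements merged into one kernel-verified Lean document; each statement's English description precedes it below -/
import Mathlib

section
/- Let (Ω, F) be a measurable space equipped with a filtration (G_n)_{n∈ℕ} of sub-σ-algebras of F, and let G_∞ = ⨆_{n} G_n. Let P and Q be probability measures on (Ω, F) such that the restriction of P to G_∞ is absolutely continuous with respect to the restriction of Q to G_∞. Let K ≥ 0 and let (ξ_n)_{n∈ℕ} be a family of G_∞-measurable real-valued random variables with |ξ_n(ω)| ≤ K for all n and ω. Then E_P[ |E_P[ξ_n | G_n] − E_Q[ξ_n | G_n]| ] → 0 as n → ∞, where E_P[· | G_n] and E_Q[· | G_n] denote conditional expectation with respect to the measures P and Q respectively. -/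
/-!
Let `Z` be the density of `P` with respect to `Q` on `G∞ = ⨆ n, G n`. Testing
`P[ξ|G n] - Q[ξ|G n]` against its own `G n`-measurable sign `s`, the change of measure `dP = Z dQ`
and the self-adjointness of `Q[·|G n]` give
`E_P |P[ξ|G n] - Q[ξ|G n]| = E_Q [(Z - Q[Z|G n]) s ξ] ≤ K E_Q |Z - Q[Z|G n]|`,
and the right-hand side tends to `0` by Lévy's upward theorem in `L¹`. Absolute continuity only
holds on `G∞`, where all the functions involved live, so the argument runs on the measures
trimmed to `G∞`.
-/

open MeasureTheory Filter Topology

namespace MeasureTheory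

variable {Ω : Type*} {m m' m0 : MeasurableSpace Ω}

theorem StronglyMeasurable.exists_mul_eq_abs {u : Ω → ℝ} (hu : StronglyMeasurable[m] u) :
    ∃ s : Ω → ℝ, StronglyMeasurable[m] s ∧ (∀ ω, ‖s ω‖ ≤ 1) ∧
      ∀ ω, s ω * u ω = |u ω| := by
  refine ⟨fun ω ↦ if u ω < 0 then -1 else 1, (Measurable.ite (hu.measurable measurableSet_Iio)
    measurable_const measurable_const).stronglyMeasurable,
    fun ω ↦ by dsimp only; split_ifs <;> simp, fun ω ↦ ?_⟩
  dsimp only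
  split_ifs with h
  · rw [abs_of_neg h, neg_one_mul]
  · rw [abs_of_nonneg (not_lt.1 h), one_mul]

theorem integral_mul_condExp_of_stronglyMeasurable {μ : Measure Ω} [IsFiniteMeasure μ]
    (hm : m ≤ m0) {f g : Ω → ℝ} (hf : StronglyMeasurable[m] f) (hg : Integrable g μ)
    (hfg : Integrable (f * g) μ) :
    ∫ ω, f ω * μ[g|m] ω ∂μ = ∫ ω, f ω * g ω ∂μ :=
  (integral_congr_ae (condExp_mul_of_stronglyMeasurable_left hf hfg hg)).symm.trans
    (integral_condExp hm)

theorem integral_mul_condExp_eq_integral_condExp_mul {μ : Measure Ω} [IsFiniteMeasure μ]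
    (hm : m ≤ m0) {f g : Ω → ℝ} {C : ℝ} (hf : Integrable f μ)
    (hg : AEStronglyMeasurable g μ) (hgC : ∀ᵐ ω ∂μ, |g ω| ≤ C) :
    ∫ ω, f ω * μ[g|m] ω ∂μ = ∫ ω, μ[f|m] ω * g ω ∂μ := by
  have hgC' : ∀ᵐ ω ∂μ, ‖g ω‖ ≤ C := hgC
  have hcgC : ∀ᵐ ω ∂μ, ‖μ[g|m] ω‖ ≤ C := ae_bdd_abs_condExp_of_ae_bdd_abs hgC
  calc ∫ ω, f ω * μ[g|m] ω ∂μ = ∫ ω, μ[g|m] ω * μ[f|m] ω ∂μ := by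
        simp_rw [mul_comm (f _)]
        exact (integral_mul_condExp_of_stronglyMeasurable hm stronglyMeasurable_condExp hf
          (hf.bdd_mul (stronglyMeasurable_condExp.mono hm).aestronglyMeasurable hcgC)).symm
    _ = ∫ ω, μ[f|m] ω * g ω ∂μ := by
        simp_rw [mul_comm (μ[g|m] _)]
        exact integral_mul_condExp_of_stronglyMeasurable hm stronglyMeasurable_condExp
          (.of_bound hg C hgC') (integrable_condExp.mul_bdd hg hgC')

variable {P Q : Measure Ω} [IsFiniteMeasure P] [IsFiniteMeasure Q]

theorem integral_condExp_sub_condExp_eq (hm : m ≤ m0) (hPQ : P ≪ Q) {η : Ω → ℝ} {C : ℝ}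
    (hη : AEStronglyMeasurable η Q) (hηC : ∀ᵐ ω ∂Q, |η ω| ≤ C) :
    ∫ ω, (P[η|m] ω - Q[η|m] ω) ∂P =
      ∫ ω, ((P.rnDeriv Q ω).toReal - Q[fun ω ↦ (P.rnDeriv Q ω).toReal|m] ω)
        * η ω ∂Q := by
  have hηC' : ∀ᵐ ω ∂Q, ‖η ω‖ ≤ C := hηC
  have hZ : Integrable (fun ω ↦ (P.rnDeriv Q ω).toReal) Q := Measure.integrable_toReal_rnDeriv
  have hQηP : Integrable (Q[η|m]) P :=
    .of_bound (stronglyMeasurable_condExp.mono hm).aestronglyMeasurable C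
      (hPQ.ae_le (ae_bdd_abs_condExp_of_ae_bdd_abs hηC))
  calc ∫ ω, (P[η|m] ω - Q[η|m] ω) ∂P = ∫ ω, P[η|m] ω ∂P - ∫ ω, Q[η|m] ω ∂P :=
        integral_sub integrable_condExp hQηP
    _ = ∫ ω, (P.rnDeriv Q ω).toReal * η ω ∂Q
          - ∫ ω, (P.rnDeriv Q ω).toReal * Q[η|m] ω ∂Q := by
        rw [integral_condExp hm, integral_toReal_rnDeriv_mul hPQ, integral_toReal_rnDeriv_mul hPQ]
    _ = ∫ ω, (P.rnDeriv Q ω).toReal * η ω ∂Q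
          - ∫ ω, Q[fun ω ↦ (P.rnDeriv Q ω).toReal|m] ω * η ω ∂Q := by
        rw [integral_mul_condExp_eq_integral_condExp_mul hm hZ hη hηC]
    _ = _ := by
        simp_rw [sub_mul]
        exact (integral_sub (hZ.mul_bdd hη hηC') (integrable_condExp.mul_bdd hη hηC')).symm

theorem integral_abs_condExp_sub_condExp_le (hm : m ≤ m0) (hPQ : P ≪ Q) {ξ : Ω → ℝ}
    {K : ℝ} (hξ : AEStronglyMeasurable ξ Q) (hξK : ∀ᵐ ω ∂Q, |ξ ω| ≤ K) :
    ∫ ω, |P[ξ|m] ω - Q[ξ|m] ω| ∂P ≤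
      K * ∫ ω, |(P.rnDeriv Q ω).toReal - Q[fun ω ↦ (P.rnDeriv Q ω).toReal|m] ω| ∂Q := by
  set Zm := Q[fun ω ↦ (P.rnDeriv Q ω).toReal|m]
  obtain ⟨s, hs, hs_norm, hs_mul⟩ :=
    (stronglyMeasurable_condExp.sub stronglyMeasurable_condExp :
      StronglyMeasurable[m] (P[ξ|m] - Q[ξ|m])).exists_mul_eq_abs
  have hξK' : ∀ᵐ ω ∂Q, ‖ξ ω‖ ≤ K := hξK
  have hξQ : Integrable ξ Q := .of_bound hξ K hξK'
  have hξP : Integrable ξ P := .of_bound (hξ.mono_ac hPQ) K (hPQ.ae_le hξK')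
  have hsξK : ∀ᵐ ω ∂Q, |s ω * ξ ω| ≤ K := hξK.mono fun ω hω ↦ by
    rw [abs_mul]; exact (mul_le_of_le_one_left (abs_nonneg _) (hs_norm ω)).trans hω
  have hPs : P[s * ξ|m] =ᵐ[P] s * P[ξ|m] :=
    condExp_stronglyMeasurable_mul_of_bound hm hs hξP 1 (ae_of_all _ hs_norm)
  have hQs : Q[s * ξ|m] =ᵐ[P] s * Q[ξ|m] :=
    hPQ.ae_le (condExp_stronglyMeasurable_mul_of_bound hm hs hξQ 1 (ae_of_all _ hs_norm))
  calc ∫ ω, |P[ξ|m] ω - Q[ξ|m] ω| ∂P = ∫ ω, (P[s * ξ|m] ω - Q[s * ξ|m] ω) ∂P := by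
        refine integral_congr_ae ?_
        filter_upwards [hPs, hQs] with ω hPω hQω
        rw [hPω, hQω, Pi.mul_apply, Pi.mul_apply, ← mul_sub]
        exact (hs_mul ω).symm
    _ = ∫ ω, ((P.rnDeriv Q ω).toReal - Zm ω) * (s ω * ξ ω) ∂Q :=
        integral_condExp_sub_condExp_eq hm hPQ ((hs.mono hm).aestronglyMeasurable.mul hξ) hsξK
    _ ≤ ∫ ω, K * |(P.rnDeriv Q ω).toReal - Zm ω| ∂Q := by
        have hZ : Integrable (fun ω ↦ (P.rnDeriv Q ω).toReal - Zm ω) Q :=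
          Measure.integrable_toReal_rnDeriv.sub integrable_condExp
        refine integral_mono_ae (hZ.mul_bdd ((hs.mono hm).aestronglyMeasurable.mul hξ) hsξK)
          (hZ.abs.const_mul K) ?_
        filter_upwards [hsξK] with ω hω
        rw [mul_comm K]
        exact (le_abs_self _).trans
          (by rw [abs_mul]; exact mul_le_mul_of_nonneg_left hω (abs_nonneg _))
    _ = K * ∫ ω, |(P.rnDeriv Q ω).toReal - Zm ω| ∂Q := integral_const_mul _ _

theorem condExp_trim_ae_eq {μ : Measure Ω} [IsFiniteMeasure μ] (hm : m ≤ m') (hm' : m' ≤ m0)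
    {f : Ω → ℝ} (hf : StronglyMeasurable[m'] f) (hfi : Integrable f μ) :
    (μ.trim hm')[f|m] =ᵐ[μ.trim hm'] μ[f|m] := by
  have hcm : StronglyMeasurable[m'] (μ[f|m]) := stronglyMeasurable_condExp.mono hm
  refine (ae_eq_condExp_of_forall_setIntegral_eq hm (hfi.trim hm' hf)
    (fun _ _ _ ↦ (integrable_condExp.trim hm' hcm).integrableOn) (fun s hs _ ↦ ?_)
    stronglyMeasurable_condExp.aestronglyMeasurable).symm
  rw [← setIntegral_trim hm' hcm (hm s hs), ← setIntegral_trim hm' hf (hm s hs)]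
  exact setIntegral_condExp (hm.trans hm') hfi hs

theorem integral_abs_condExp_sub_condExp_le_of_trim (hm : m ≤ m') (hm' : m' ≤ m0)
    (hPQ : P.trim hm' ≪ Q.trim hm') {ξ : Ω → ℝ} {K : ℝ} (hξ : StronglyMeasurable[m'] ξ)
    (hξK : ∀ᵐ ω ∂Q.trim hm', |ξ ω| ≤ K) :
    ∫ ω, |P[ξ|m] ω - Q[ξ|m] ω| ∂P ≤
      K * ∫ ω, |((P.trim hm').rnDeriv (Q.trim hm') ω).toReal
        - Q[fun ω ↦ ((P.trim hm').rnDeriv (Q.trim hm') ω).toReal|m] ω| ∂Q := by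
  set Z := fun ω ↦ ((P.trim hm').rnDeriv (Q.trim hm') ω).toReal
  have hZ : StronglyMeasurable[m'] Z :=
    (Measure.measurable_rnDeriv _ _).ennreal_toReal.stronglyMeasurable
  have hξP : Integrable ξ P := .of_bound (hξ.mono hm').aestronglyMeasurable K
    (ae_of_ae_trim hm' (hPQ.ae_le hξK))
  have hξQ : Integrable ξ Q :=
    .of_bound (hξ.mono hm').aestronglyMeasurable K (ae_of_ae_trim hm' hξK)
  have hPξ := condExp_trim_ae_eq hm hm' hξ hξP
  have hQξ := hPQ.ae_le (condExp_trim_ae_eq hm hm' hξ hξQ)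
  have hQZ := condExp_trim_ae_eq hm hm' hZ
    (integrable_of_integrable_trim hm' Measure.integrable_toReal_rnDeriv)
  calc ∫ ω, |P[ξ|m] ω - Q[ξ|m] ω| ∂P = ∫ ω, |P[ξ|m] ω - Q[ξ|m] ω| ∂P.trim hm' :=
        integral_trim hm' (continuous_abs.comp_stronglyMeasurable
          ((stronglyMeasurable_condExp.sub stronglyMeasurable_condExp).mono hm))
    _ = ∫ ω, |(P.trim hm')[ξ|m] ω - (Q.trim hm')[ξ|m] ω| ∂P.trim hm' := by
        refine integral_congr_ae ?_
        filter_upwards [hPξ, hQξ] with ω hPω hQω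
        rw [hPω, hQω]
    _ ≤ K * ∫ ω, |Z ω - (Q.trim hm')[Z|m] ω| ∂Q.trim hm' :=
        integral_abs_condExp_sub_condExp_le hm hPQ hξ.aestronglyMeasurable hξK
    _ = K * ∫ ω, |Z ω - Q[Z|m] ω| ∂Q := by
        rw [integral_congr_ae (hQZ.mono fun ω hω ↦ by rw [hω])]
        exact congrArg (K * ·) (integral_trim hm' (continuous_abs.comp_stronglyMeasurable
          (hZ.sub (stronglyMeasurable_condExp.mono hm)))).symm

theorem tendsto_integral_abs_sub_condExp {μ : Measure Ω} [IsFiniteMeasure μ]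
    {ℱ : Filtration ℕ m0} {g : Ω → ℝ} (hg : Integrable g μ)
    (hgm : StronglyMeasurable[⨆ n, ℱ n] g) :
    Tendsto (fun n ↦ ∫ ω, |g ω - μ[g|ℱ n] ω| ∂μ) atTop (𝓝 0) := by
  have h := (ENNReal.tendsto_toReal ENNReal.zero_ne_top).comp (hg.tendsto_eLpNorm_condExp hgm)
  refine h.congr fun n ↦ ?_
  rw [Function.comp_apply, eLpNorm_one_eq_lintegral_enorm, ← integral_norm_eq_lintegral_enorm
    ((stronglyMeasurable_condExp.mono (ℱ.le n)).aestronglyMeasurable.sub hg.1)]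
  simp only [Pi.sub_apply, Real.norm_eq_abs, abs_sub_comm]

end MeasureTheory

theorem filter_stability_of_absolutelyContinuous_general
    {Ω : Type*} {m0 : MeasurableSpace Ω} (G : Filtration ℕ m0)
    (P Q : Measure Ω) [IsProbabilityMeasure P] [IsProbabilityMeasure Q]
    (hac : P.trim (iSup_le fun n => G.le n : (⨆ n, (G n : MeasurableSpace Ω)) ≤ m0) ≪
      Q.trim (iSup_le fun n => G.le n : (⨆ n, (G n : MeasurableSpace Ω)) ≤ m0))
    (K : ℝ) (ξ : ℕ → Ω → ℝ)
    (hmeas : ∀ n, StronglyMeasurable[⨆ i, (G i : MeasurableSpace Ω)] (ξ n))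
    (hbound : ∀ n ω, |ξ n ω| ≤ K) :
    Tendsto (fun n => ∫ ω, |(P[ξ n | G n]) ω - (Q[ξ n | G n]) ω| ∂P) atTop (nhds 0) := by
  have hle : (⨆ n, (G n : MeasurableSpace Ω)) ≤ m0 := iSup_le G.le
  set Z := fun ω ↦ ((P.trim hle).rnDeriv (Q.trim hle) ω).toReal
  have hZ : Integrable Z Q := integrable_of_integrable_trim hle Measure.integrable_toReal_rnDeriv
  have hZm : StronglyMeasurable[⨆ n, (G n : MeasurableSpace Ω)] Z :=
    (Measure.measurable_rnDeriv _ _).ennreal_toReal.stronglyMeasurable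
  refine squeeze_zero (fun n ↦ integral_nonneg fun ω ↦ abs_nonneg _) (fun n ↦
    integral_abs_condExp_sub_condExp_le_of_trim (le_iSup _ n) hle hac (hmeas n)
      (ae_of_all _ (hbound n))) ?_
  simpa using (tendsto_integral_abs_sub_condExp hZ hZm).const_mul K

/-- **Stability of filtered estimates of bounded tail-measurable random variables.**
If the restrictions of `P` and `Q` to `G∞ = ⨆ n, G n` are absolutely continuous and
`ξ n` are uniformly bounded `G∞`-measurable random variables, then
`E_P |E_P[ξ n | G n] − E_Q[ξ n | G n]| → 0`. -/
theorem filter_stability_of_absolutelyContinuous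
    {Ω : Type*} {m0 : MeasurableSpace Ω} (G : Filtration ℕ m0)
    (P Q : Measure Ω) [IsProbabilityMeasure P] [IsProbabilityMeasure Q]
    (hac : P.trim (iSup_le fun n => G.le n : (⨆ n, (G n : MeasurableSpace Ω)) ≤ m0) ≪
      Q.trim (iSup_le fun n => G.le n : (⨆ n, (G n : MeasurableSpace Ω)) ≤ m0))
    (K : ℝ) (hK : 0 ≤ K) (ξ : ℕ → Ω → ℝ)
    (hmeas : ∀ n, StronglyMeasurable[⨆ i, (G i : MeasurableSpace Ω)] (ξ n))
    (hbound : ∀ n ω, |ξ n ω| ≤ K) :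
    Tendsto (fun n => ∫ ω, |(P[ξ n | G n]) ω - (Q[ξ n | G n]) ω| ∂P) atTop (nhds 0) :=
  filter_stability_of_absolutelyContinuous_general G P Q hac K ξ hmeas hbound
end

section
/- Let A be a unital C*-algebra over ℂ with state space S (the set of continuous linear functionals φ : A → ℂ with φ(1) = 1 and φ(x* x) real and nonnegative for all x), equipped with the weak-* topology and its Borel σ-algebra. Let μ₁, μ₂ be Borel probability measures on S, and let ρ₁, ρ₂ be states that are the barycenters of μ₁, μ₂ respectively, i.e. ρᵢ(X) = ∫_S φ(X) dμᵢ(φ) for all X ∈ A. Assume μ₁ is absolutely continuous with respect to μ₂. Then for every sequence (X_n) in A such that ρ₁((X_m − X_n)*(X_m − X_n)) → 0 as m, n → ∞ (i.e. for every ε > 0 there is N with ρ₁((X_m − X_n)*(X_m − X_n)) < ε for all m, n ≥ N), the following holds: if ρ₂(X_n* X_n) → 0 as n → ∞, then ρ₁(X_n* X_n) → 0 as n → ∞. -/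
open MeasureTheory Filter
open scoped ComplexOrder

/-- The state space of a (unital, star, topological) complex algebra: the set of
continuous linear functionals `φ` (with the weak-* topology inherited from
`WeakDual ℂ A`) satisfying `φ 1 = 1` and `φ (x* x)` real and nonnegative. -/
def StateSpace (A : Type*) [Ring A] [StarRing A] [Module ℂ A] [TopologicalSpace A] :
    Set (WeakDual ℂ A) :=
  {φ | φ 1 = 1 ∧ ∀ x : A, 0 ≤ φ (star x * x)}

/-- The Borel σ-algebra of the weak-* topology on the state space. -/
noncomputable instance StateSpace.instMeasurableSpace (A : Type*) [Ring A] [StarRing A]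
    [Module ℂ A] [TopologicalSpace A] : MeasurableSpace ↥(StateSpace A) :=
  borel _

/-!
Since `ρ₂ (Xₙ* Xₙ) = ∫ φ (Xₙ* Xₙ) dμ₂ → 0` with nonnegative integrands, a subsequence
`φ (X_{n_k}* X_{n_k}) → 0` converges `μ₂`-a.e., hence `μ₁`-a.e. For each such state `φ` the GNS
seminorm `x ↦ √φ (x* x)` gives `φ ((X_m - X_{n_k})* (X_m - X_{n_k})) → φ (X_m* X_m)`, so Fatou's
lemma for `μ₁` bounds `ρ₁ (X_m* X_m)` by `liminf_k ρ₁ ((X_m - X_{n_k})* (X_m - X_{n_k}))`, which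
the Cauchy hypothesis makes small.
-/

open scoped Topology

instance StateSpace.instBorelSpace (A : Type*) [Ring A] [StarRing A] [Module ℂ A]
    [TopologicalSpace A] : BorelSpace ↥(StateSpace A) :=
  ⟨rfl⟩

theorem StateSpace.measurable_eval {A : Type*} [Ring A] [StarRing A] [Module ℂ A]
    [TopologicalSpace A] (x : A) : Measurable fun φ : StateSpace A => φ.1 x :=
  ((WeakDual.eval_continuous x).comp continuous_subtype_val).measurable

section MeasureTheory

variable {α E : Type*} [MeasurableSpace α] {μ : Measure α}

theorem lintegral_enorm_le_liminf_of_tendsto_ae [NormedAddCommGroup E] {f : ℕ → α → E}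
    {g : α → E} (hfg : ∀ᵐ x ∂μ, Tendsto (fun n => f n x) atTop (𝓝 (g x)))
    (hf : ∀ n, AEMeasurable (fun x => ‖f n x‖ₑ) μ) :
    ∫⁻ x, ‖g x‖ₑ ∂μ ≤ liminf (fun n => ∫⁻ x, ‖f n x‖ₑ ∂μ) atTop :=
  lintegral_congr_ae (by filter_upwards [hfg] with x hx using hx.enorm.liminf_eq) ▸
    lintegral_liminf_le' hf

theorem exists_seq_tendsto_ae_of_tendsto_lintegral_enorm [NormedAddCommGroup E]
    {f : ℕ → α → E} (hf : ∀ n, AEStronglyMeasurable (f n) μ)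
    (hlim : Tendsto (fun n => ∫⁻ x, ‖f n x‖ₑ ∂μ) atTop (𝓝 0)) :
    ∃ ns : ℕ → ℕ, StrictMono ns ∧ ∀ᵐ x ∂μ, Tendsto (fun k => f (ns k) x) atTop (𝓝 0) :=
  (tendstoInMeasure_of_tendsto_eLpNorm one_ne_zero hf aestronglyMeasurable_const
    (by simpa [eLpNorm_one_eq_lintegral_enorm] using hlim)).exists_seq_tendsto_ae

theorem norm_integral_eq_integral_norm_of_nonneg {𝕜 : Type*} [RCLike 𝕜] {f : α → 𝕜}
    (hf : ∀ x, 0 ≤ f x) : ‖∫ x, f x ∂μ‖ = ∫ x, ‖f x‖ ∂μ := by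
  have hcast : ∫ x, f x ∂μ = ((∫ x, ‖f x‖ ∂μ : ℝ) : 𝕜) := by
    rw [← integral_ofReal]
    exact integral_congr_ae (ae_of_all _ fun x => (RCLike.norm_of_nonneg' (hf x)).symm)
  rw [hcast, RCLike.norm_of_nonneg (integral_nonneg fun x => norm_nonneg _)]

theorem lintegral_enorm_eq_enorm_integral_of_nonneg {𝕜 : Type*} [RCLike 𝕜] {f : α → 𝕜}
    (hf : ∀ x, 0 ≤ f x) (hfi : Integrable f μ) : ∫⁻ x, ‖f x‖ₑ ∂μ = ‖∫ x, f x ∂μ‖ₑ := by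
  rw [← ofReal_integral_norm_eq_lintegral_enorm hfi, ← norm_integral_eq_integral_norm_of_nonneg hf,
    ofReal_norm]

end MeasureTheory

namespace StateSpace

section CStarAlgebra

variable {A : Type*} [CStarAlgebra A] {φ : WeakDual ℂ A}

noncomputable def toPositiveLinearMap [PartialOrder A] [StarOrderedRing A]
    (hφ : φ ∈ StateSpace A) : A →ₚ[ℂ] ℂ :=
  PositiveLinearMap.mk₀ (φ : A →L[ℂ] ℂ).toLinearMap fun x hx => by
    obtain ⟨b, rfl⟩ := CStarAlgebra.nonneg_iff_eq_star_mul_self.mp hx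
    exact hφ.2 b

@[simp]
theorem toPositiveLinearMap_apply [PartialOrder A] [StarOrderedRing A] (hφ : φ ∈ StateSpace A)
    (x : A) : toPositiveLinearMap hφ x = φ x :=
  rfl

theorem norm_apply_star_mul_self_le (hφ : φ ∈ StateSpace A) (x : A) :
    ‖φ (star x * x)‖ ≤ ‖x‖ ^ 2 := by
  let := CStarAlgebra.spectralOrder A
  let := CStarAlgebra.spectralOrderedRing A
  have h := (toPositiveLinearMap hφ).norm_apply_le_of_nonneg _ (star_mul_self_nonneg x)
  simpa [hφ.1, CStarRing.norm_star_mul_self, sq] using h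

theorem tendsto_apply_star_sub_mul_sub (hφ : φ ∈ StateSpace A) {a : A} {b : ℕ → A}
    (hb : Tendsto (fun k => φ (star (b k) * b k)) atTop (𝓝 0)) :
    Tendsto (fun k => φ (star (a - b k) * (a - b k))) atTop (𝓝 (φ (star a * a))) := by
  let := CStarAlgebra.spectralOrder A
  let := CStarAlgebra.spectralOrderedRing A
  set f := toPositiveLinearMap hφ
  have hsq : ∀ x, φ (star x * x) = ((‖f.toPreGNS x‖ ^ 2 : ℝ) : ℂ) := fun x => by
    rw [Complex.ofReal_pow, f.preGNS_norm_sq]; rfl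
  simp only [hsq, map_sub] at hb ⊢
  rw [← Complex.ofReal_zero, tendsto_ofReal_iff] at hb
  rw [tendsto_ofReal_iff]
  have hb0 : Tendsto (fun k => f.toPreGNS (b k)) atTop (𝓝 0) := by
    rw [tendsto_zero_iff_norm_tendsto_zero]
    simpa [Real.sqrt_sq (norm_nonneg _)] using hb.sqrt
  simpa using ((tendsto_const_nhds (x := f.toPreGNS a)).sub hb0).norm.pow 2

theorem integrable_apply_star_mul_self (μ : Measure (StateSpace A)) [IsFiniteMeasure μ] (x : A) :
    Integrable (fun φ : StateSpace A => φ.1 (star x * x)) μ :=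
  .of_bound (measurable_eval _).aestronglyMeasurable (‖x‖ ^ 2)
    (ae_of_all _ fun φ => norm_apply_star_mul_self_le φ.2 x)

theorem lintegral_enorm_apply_star_mul_self {μ : Measure (StateSpace A)} [IsFiniteMeasure μ]
    {ρ : WeakDual ℂ A} (hρ : ∀ x, ρ x = ∫ φ, φ.1 x ∂μ) (x : A) :
    ∫⁻ φ, ‖φ.1 (star x * x)‖ₑ ∂μ = ‖ρ (star x * x)‖ₑ := by
  rw [hρ, lintegral_enorm_eq_enorm_integral_of_nonneg (fun φ => φ.2.2 x)
    (integrable_apply_star_mul_self μ x)]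

theorem norm_apply_star_mul_self_le_of_tendsto_ae {μ : Measure (StateSpace A)}
    [IsFiniteMeasure μ] {ρ : WeakDual ℂ A} (hρ : ∀ x, ρ x = ∫ φ, φ.1 x ∂μ) {a : A} {b : ℕ → A}
    (hb : ∀ᵐ φ ∂μ, Tendsto (fun k => φ.1 (star (b k) * b k)) atTop (𝓝 0)) {c : ℝ}
    (hc : ∀ᶠ k in atTop, ‖ρ (star (a - b k) * (a - b k))‖ ≤ c) :
    ‖ρ (star a * a)‖ ≤ c := by
  obtain ⟨k, hk⟩ := hc.exists
  have hc' : ∀ᶠ k in atTop, ‖ρ (star (a - b k) * (a - b k))‖ₑ ≤ .ofReal c :=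
    hc.mono fun k hk => by rw [← ofReal_norm]; exact ENNReal.ofReal_le_ofReal hk
  have hfatou : ‖ρ (star a * a)‖ₑ ≤ .ofReal c :=
    calc ‖ρ (star a * a)‖ₑ = ∫⁻ φ, ‖φ.1 (star a * a)‖ₑ ∂μ :=
          (lintegral_enorm_apply_star_mul_self hρ a).symm
      _ ≤ liminf (fun k => ∫⁻ φ, ‖φ.1 (star (a - b k) * (a - b k))‖ₑ ∂μ) atTop :=
          lintegral_enorm_le_liminf_of_tendsto_ae
            (hb.mono fun φ => tendsto_apply_star_sub_mul_sub φ.2)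
            fun k => (measurable_eval _).enorm.aemeasurable
      _ ≤ .ofReal c := by
          simpa only [lintegral_enorm_apply_star_mul_self hρ] using
            liminf_le_of_frequently_le' hc'.frequently
  rwa [← ofReal_norm, ENNReal.ofReal_le_ofReal_iff ((norm_nonneg _).trans hk)] at hfatou

end CStarAlgebra

end StateSpace

theorem barycenter_absolutelyContinuous_almost_dominated_general
    {A : Type*} [NormedRing A] [StarRing A] [CStarRing A]
    [NormedAlgebra ℂ A] [StarModule ℂ A] [CompleteSpace A]
    (μ₁ μ₂ : Measure ↥(StateSpace A))
    [IsProbabilityMeasure μ₁] [IsProbabilityMeasure μ₂]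
    (ρ₁ ρ₂ : WeakDual ℂ A) (hρ₁ : ρ₁ ∈ StateSpace A)
    (hbar₁ : ∀ X : A, ρ₁ X = ∫ φ, φ.1 X ∂μ₁)
    (hbar₂ : ∀ X : A, ρ₂ X = ∫ φ, φ.1 X ∂μ₂)
    (hac : μ₁ ≪ μ₂) (X : ℕ → A)
    (hCauchy : ∀ ε : ℝ, 0 < ε → ∃ N : ℕ, ∀ m n : ℕ, N ≤ m → N ≤ n →
      ρ₁ (star (X m - X n) * (X m - X n)) < (ε : ℂ))
    (h₂ : Tendsto (fun n => ρ₂ (star (X n) * X n)) atTop (nhds 0)) :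
    Tendsto (fun n => ρ₁ (star (X n) * X n)) atTop (nhds 0) := by
  let : CStarAlgebra A := {}
  obtain ⟨ns, hns, hae₂⟩ := exists_seq_tendsto_ae_of_tendsto_lintegral_enorm (μ := μ₂)
    (fun n => (StateSpace.measurable_eval (star (X n) * X n)).aestronglyMeasurable)
    (by simpa only [StateSpace.lintegral_enorm_apply_star_mul_self hbar₂, enorm_zero]
      using h₂.enorm)
  have hae₁ := hae₂.filter_mono hac.ae_le
  refine NormedAddGroup.tendsto_nhds_zero.2 fun ε hε => ?_
  obtain ⟨N, hN⟩ := hCauchy (ε / 2) (half_pos hε)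
  have hN' : ∀ m n, N ≤ m → N ≤ n → ‖ρ₁ (star (X m - X n) * (X m - X n))‖ ≤ ε / 2 := by
    intro m n hm hn
    have h := hN m n hm hn
    rw [← Complex.norm_of_nonneg' (hρ₁.2 _), Complex.real_lt_real] at h
    exact h.le
  refine eventually_atTop.2 ⟨N, fun m hm => ?_⟩
  refine (StateSpace.norm_apply_star_mul_self_le_of_tendsto_ae hbar₁ hae₁ ?_).trans_lt
    (half_lt_self hε)
  exact (hns.tendsto_atTop.eventually_ge_atTop N).mono fun k hk => hN' m (ns k) hm hk

/-- **Absolute continuity of barycenters implies almost domination.**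
If `ρ₁, ρ₂` are barycenters of Borel probability measures `μ₁ ≪ μ₂` on the state space
of a unital C*-algebra, then for every sequence `(X n)` which is Cauchy for the seminorm
induced by `ρ₁`, `ρ₂ (Xₙ* Xₙ) → 0` implies `ρ₁ (Xₙ* Xₙ) → 0`. -/
theorem barycenter_absolutelyContinuous_almost_dominated
    {A : Type*} [NormedRing A] [StarRing A] [CStarRing A]
    [NormedAlgebra ℂ A] [StarModule ℂ A] [CompleteSpace A]
    (μ₁ μ₂ : Measure ↥(StateSpace A))
    [IsProbabilityMeasure μ₁] [IsProbabilityMeasure μ₂]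
    (ρ₁ ρ₂ : WeakDual ℂ A) (hρ₁ : ρ₁ ∈ StateSpace A) (hρ₂ : ρ₂ ∈ StateSpace A)
    (hbar₁ : ∀ X : A, ρ₁ X = ∫ φ, φ.1 X ∂μ₁)
    (hbar₂ : ∀ X : A, ρ₂ X = ∫ φ, φ.1 X ∂μ₂)
    (hac : μ₁ ≪ μ₂) (X : ℕ → A)
    (hCauchy : ∀ ε : ℝ, 0 < ε → ∃ N : ℕ, ∀ m n : ℕ, N ≤ m → N ≤ n →
      ρ₁ (star (X m - X n) * (X m - X n)) < (ε : ℂ))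
    (h₂ : Tendsto (fun n => ρ₂ (star (X n) * X n)) atTop (nhds 0)) :
    Tendsto (fun n => ρ₁ (star (X n) * X n)) atTop (nhds 0) :=
  barycenter_absolutelyContinuous_almost_dominated_general μ₁ μ₂ ρ₁ ρ₂ hρ₁ hbar₁ hbar₂ hac X hCauchy
    h₂
end
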